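/- Let R be a faithful, interval-finite signed groupoid set in which every atomic morphism is simple (|Φ_s| = 1). Then R is principal: G is generated by its simple morphisms and for every morphism g, the length l(g) of g with respect to the set of simple morphisms equals |Φ_g|. Conversely, if R is principal then every atomic morphism of R is simple and R is preprincipal. -/

import Mathlib

open CategoryTheory

universe u v

/-- A signed groupoid set: a groupoid `G` acting on a family of definitely involuted
sets `R a` (`a ∈ Ob G`), with involution `neg`, positive parts `pos a`, and the action
commuting with the involution. -/
structure SGS (G : Type u) [Groupoid G] (R : G → Type v) where
  neg : ∀ {a : G}, R a → R a
  pos : ∀ a : G, Set (R a)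
  act : ∀ {a b : G}, (b ⟶ a) → R b → R a
  neg_neg : ∀ {a : G} (x : R a), neg (neg x) = x
  pos_iff : ∀ {a : G} (x : R a), x ∈ pos a ↔ neg x ∉ pos a
  act_id : ∀ {a : G} (x : R a), act (𝟙 a) x = x
  act_comp : ∀ {a b c : G} (g : c ⟶ b) (f : b ⟶ a) (x : R c),
      act f (act g x) = act (g ≫ f) x
  act_neg : ∀ {a b : G} (f : b ⟶ a) (x : R b), act f (neg x) = neg (act f x)

/-- The morphisms of `G` with codomain `a`. -/
abbrev SHoms (G : Type u) [Groupoid G] (a : G) : Type _ := Σ b : G, (b ⟶ a)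

namespace SGS

variable {G : Type u} [Groupoid G] {R : G → Type v} (S : SGS G R)

/-- The inversion set of a morphism `f : b ⟶ a`: positive roots at `a` sent to
negative roots at `b` by `f⁻¹`. -/
def Phi {a b : G} (f : b ⟶ a) : Set (R a) :=
  {α | α ∈ S.pos a ∧ S.act (Groupoid.inv f) α ∉ S.pos b}

/-- The inversion set of an element of `SHoms G a`. -/
def PhiS {a : G} (g : SHoms G a) : Set (R a) := S.Phi g.2

/-- `S` is faithful if only identity morphisms have empty inversion set. -/
def Faithful : Prop :=
  ∀ ⦃a b : G⦄ (f : b ⟶ a), S.Phi f = ∅ → ∃ h : b = a, f = eqToHom h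

/-- `j` is an upper bound of `F` in the weak order at `a`. -/
def IsUB {a : G} (F : Set (SHoms G a)) (j : SHoms G a) : Prop :=
  ∀ g ∈ F, S.PhiS g ⊆ S.PhiS j

/-- `j` is a least upper bound of `F` in the weak order at `a`. -/
def IsLUBw {a : G} (F : Set (SHoms G a)) (j : SHoms G a) : Prop :=
  S.IsUB F j ∧ ∀ k : SHoms G a, S.IsUB F k → S.PhiS j ⊆ S.PhiS k

/-- `S` is complete: the weak order at every object is a complete lattice
(equivalently, every family of morphisms with a common codomain has a join). -/
def Complete : Prop := ∀ (a : G) (F : Set (SHoms G a)), ∃ j : SHoms G a, S.IsLUBw F j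

/-- `S` is finite: finitely many objects, morphisms and roots. -/
def FiniteSGS (_S : SGS G R) : Prop :=
  Finite G ∧ (∀ a b : G, Finite (a ⟶ b)) ∧ ∀ a : G, Finite (R a)

/-- A square `(x, w, y, z)`: a commuting square `xw = yz` with `x(Φ_w) = Φ_y`. -/
def Square {a b c d : G} (x : b ⟶ d) (w : a ⟶ b) (y : c ⟶ d) (z : a ⟶ c) : Prop :=
  w ≫ x = z ≫ y ∧ S.act x '' S.Phi w = S.Phi y

/-- The positive real roots at `a`: the union of all inversion sets at `a`. -/
def posRe (a : G) : Set (R a) := ⋃ g : SHoms G a, S.PhiS g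

/-- An atomic morphism: an atom of the weak order at its codomain. -/
def Atomic {a : G} (g : SHoms G a) : Prop :=
  S.PhiS g ≠ ∅ ∧ ∀ h : SHoms G a, S.PhiS h ⊆ S.PhiS g →
    S.PhiS h = ∅ ∨ S.PhiS h = S.PhiS g

/-- A simple morphism: one whose inversion set is a singleton. -/
def Simple {a b : G} (f : b ⟶ a) : Prop := ∃ α : R a, S.Phi f = {α}

/-- Interval finiteness: every interval `[1ₐ, g]` of a weak order is finite. -/
def IntervalFinite : Prop :=
  ∀ (a : G) (g : SHoms G a), {h : SHoms G a | S.PhiS h ⊆ S.PhiS g}.Finite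

/-- Preprincipal: interval finite, and the inversion set of an atomic morphism is
contained in, or disjoint from, any other inversion set at the same object. -/
def Preprincipal : Prop :=
  S.IntervalFinite ∧ ∀ (a : G) (s g : SHoms G a), S.Atomic s →
    S.PhiS s ⊆ S.PhiS g ∨ S.PhiS s ∩ S.PhiS g = ∅

/-- Antipodal: the weak order at each object has a maximum element. -/
def Antipodal : Prop :=
  ∀ a : G, ∃ ω : SHoms G a, ∀ g : SHoms G a, S.PhiS g ⊆ S.PhiS ω

end SGS

/-- `Word S f n`: `f` is a product of `n` factors, each a simple morphism or the
inverse of a simple morphism (identities are empty products). -/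
inductive Word {G : Type u} [Groupoid G] {R : G → Type v} (S : SGS G R) :
    ∀ {a b : G}, (b ⟶ a) → ℕ → Prop
  | nil (a : G) : Word S (𝟙 a) 0
  | cons {a b c : G} (s : c ⟶ b) (f : b ⟶ a) (n : ℕ) :
      (S.Simple s ∨ S.Simple (Groupoid.inv s)) → Word S f n → Word S (s ≫ f) (n + 1)

/-- Principal: the simple morphisms generate the groupoid and the length of every
morphism with respect to the simple morphisms equals the cardinality of its
inversion set. -/
def SGS.Principal {G : Type u} [Groupoid G] {R : G → Type v} (S : SGS G R) : Prop :=
  (∀ {a b : G} (f : b ⟶ a), Word S f (S.Phi f).ncard) ∧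
  (∀ {a b : G} (f : b ⟶ a) (n : ℕ), Word S f n → (S.Phi f).ncard ≤ n)

/-!
Lean composes diagrammatically: the paper's `gf` is `f ≫ g`.

If `f` is not an identity, interval finiteness provides an atom `h ≤ f`, which is simple,
`Φ_h = {α}`. Then `Φ_{h⁻¹f} = h⁻¹(Φ_f ∖ {α})`, and `k ↦ hk` embeds the interval below `h⁻¹f`
into the interval below `f` without the identity, so induction on the size of that interval
writes `f` as a word of length `|Φ_f|`. The product formula makes `|Φ|` subadditive, which
gives `|Φ_g| ≤ l(g)`.

Conversely, in a principal set write an atom as `f = tg` with `Φ_t = {α}` and `g` a word of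
length `|Φ_f| - 1`.
If `α ∉ Φ_f` then `Φ_f ⊆ t(Φ_g)` would have at most `|Φ_f| - 1` elements; so `Φ_t ⊆ Φ_f`, and
atomicity forces `Φ_f = {α}`. Inversion sets of a principal set are finite, and by faithfulness
they determine the morphism, whence interval finiteness.
-/

lemma CategoryTheory.Groupoid.inv_inv {C : Type u} [Groupoid C] {X Y : C} (f : X ⟶ Y) :
    Groupoid.inv (Groupoid.inv f) = f := by
  simp [Groupoid.inv_eq_inv]

namespace SGS

variable {G : Type u} [Groupoid G] {R : G → Type v} (S : SGS G R)

lemma inv_act_act {a b : G} (f : b ⟶ a) (x : R b) :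
    S.act (Groupoid.inv f) (S.act f x) = x := by
  rw [S.act_comp, Groupoid.comp_inv, S.act_id]

lemma act_inv_act {a b : G} (f : b ⟶ a) (x : R a) :
    S.act f (S.act (Groupoid.inv f) x) = x := by
  rw [S.act_comp, Groupoid.inv_comp, S.act_id]

lemma act_injective {a b : G} (f : b ⟶ a) : Function.Injective (S.act f) :=
  Function.LeftInverse.injective (S.inv_act_act f)

lemma mem_image_act_iff {a b : G} (f : b ⟶ a) (t : Set (R b)) (α : R a) :
    α ∈ S.act f '' t ↔ S.act (Groupoid.inv f) α ∈ t := by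
  constructor
  · rintro ⟨x, hx, rfl⟩
    rwa [S.inv_act_act]
  · exact fun h => ⟨_, h, S.act_inv_act f α⟩

lemma mem_image_neg_iff {a : G} (t : Set (R a)) (α : R a) :
    α ∈ S.neg '' t ↔ S.neg α ∈ t := by
  constructor
  · rintro ⟨x, hx, rfl⟩
    rwa [S.neg_neg]
  · exact fun h => ⟨_, h, S.neg_neg α⟩

lemma phi_id (a : G) : S.Phi (𝟙 a) = ∅ := by
  ext α
  simp [Phi, S.act_id]

lemma phi_comp {a b c : G} (g : c ⟶ b) (f : b ⟶ a) :
    S.Phi (g ≫ f) = (S.Phi f \ S.neg '' (S.act f '' S.Phi g))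
      ∪ (S.act f '' S.Phi g \ S.neg '' S.Phi f) := by
  ext α
  have hinv : S.act (Groupoid.inv (g ≫ f)) α
      = S.act (Groupoid.inv g) (S.act (Groupoid.inv f) α) := by
    rw [S.act_comp, Groupoid.inv_eq_inv, IsIso.inv_comp, ← Groupoid.inv_eq_inv,
      ← Groupoid.inv_eq_inv]
  simp only [Set.mem_union, Set.mem_sdiff, mem_image_neg_iff, mem_image_act_iff, Phi,
    Set.mem_ofPred_eq, hinv, S.act_neg]
  have h1 := S.pos_iff α
  have h2 := S.pos_iff (S.act (Groupoid.inv f) α)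
  have h3 := S.pos_iff (S.act (Groupoid.inv g) (S.act (Groupoid.inv f) α))
  tauto

lemma phi_inv {a b : G} (f : b ⟶ a) :
    S.Phi (Groupoid.inv f) = S.neg '' (S.act (Groupoid.inv f) '' S.Phi f) := by
  ext γ
  simp only [mem_image_neg_iff, mem_image_act_iff, Phi, Set.mem_ofPred_eq,
    Groupoid.inv_inv, S.act_neg, S.inv_act_act]
  have h1 := S.pos_iff γ
  have h2 := S.pos_iff (S.act f γ)
  tauto

lemma exists_phi_eq_singleton {a b : G} {s : b ⟶ a}
    (hs : S.Simple s ∨ S.Simple (Groupoid.inv s)) : ∃ α, S.Phi s = {α} := by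
  rcases hs with hs | ⟨β, hβ⟩
  · exact hs
  · refine ⟨S.neg (S.act s β), ?_⟩
    rw [← Groupoid.inv_inv s, S.phi_inv, hβ, Groupoid.inv_inv, Set.image_singleton,
      Set.image_singleton]

lemma phi_comp_subset {a b c : G} (g : c ⟶ b) (f : b ⟶ a) :
    S.Phi (g ≫ f) ⊆ S.Phi f ∪ S.act f '' S.Phi g := by
  rw [S.phi_comp]
  exact Set.union_subset_union Set.sdiff_subset Set.sdiff_subset

lemma phi_comp_subset_insert {a b c : G} {s : c ⟶ b} {α : R b} (hs : S.Phi s = {α})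
    (f : b ⟶ a) : S.Phi (s ≫ f) ⊆ insert (S.act f α) (S.Phi f) := by
  simpa [hs, Set.union_singleton] using S.phi_comp_subset s f

lemma phi_comp_of_image_subset_pos {a b c : G} (g : c ⟶ b) (f : b ⟶ a)
    (hg : S.act f '' S.Phi g ⊆ S.pos a) :
    S.Phi (g ≫ f) = S.Phi f ∪ S.act f '' S.Phi g := by
  rw [S.phi_comp]
  congr 1 <;> refine sdiff_eq_left.2 (Set.disjoint_left.2 fun β hβ hnβ => ?_)
  · exact (S.pos_iff β).1 hβ.1 (hg ((S.mem_image_neg_iff _ β).1 hnβ))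
  · exact (S.pos_iff β).1 (hg hβ) ((S.mem_image_neg_iff _ β).1 hnβ).1

lemma phi_comp_inv_of_subset {a b c : G} {f : b ⟶ a} {h : c ⟶ a} (hhf : S.Phi h ⊆ S.Phi f) :
    S.Phi (f ≫ Groupoid.inv h) = S.act (Groupoid.inv h) '' (S.Phi f \ S.Phi h) := by
  rw [S.phi_comp, S.phi_inv, Set.image_sdiff (S.act_injective _),
    sdiff_eq_bot_iff.2 (Set.image_mono (Set.image_mono hhf)), Set.image_image]
  simp [S.neg_neg]

lemma phiS_injective (hfa : S.Faithful) (a : G) : Function.Injective (S.PhiS (a := a)) := by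
  rintro ⟨b, g⟩ ⟨c, h⟩ (hgh : S.Phi g = S.Phi h)
  have hempty : S.Phi (g ≫ Groupoid.inv h) = ∅ := by
    rw [S.phi_comp_inv_of_subset hgh.symm.subset, hgh, sdiff_self, Set.bot_eq_empty,
      Set.image_empty]
  obtain ⟨rfl, hgh'⟩ := hfa _ hempty
  obtain rfl : g = h := by simpa using congrArg (· ≫ h) hgh'
  rfl

end SGS

namespace Word

variable {G : Type u} [Groupoid G] {R : G → Type v} {S : SGS G R}

lemma finite_phi {a b : G} {f : b ⟶ a} {n : ℕ} (hw : Word S f n) : (S.Phi f).Finite := by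
  induction hw with
  | nil => simp [S.phi_id]
  | cons s f n hs _ ih =>
    obtain ⟨α, hα⟩ := S.exists_phi_eq_singleton hs
    exact (ih.insert _).subset (S.phi_comp_subset_insert hα f)

lemma ncard_phi_le {a b : G} {f : b ⟶ a} {n : ℕ} (hw : Word S f n) : (S.Phi f).ncard ≤ n := by
  induction hw with
  | nil => simp [S.phi_id]
  | cons s f n hs hw ih =>
    obtain ⟨α, hα⟩ := S.exists_phi_eq_singleton hs
    calc (S.Phi (s ≫ f)).ncard ≤ (insert (S.act f α) (S.Phi f)).ncard :=
          Set.ncard_le_ncard (S.phi_comp_subset_insert hα f) (hw.finite_phi.insert _)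
      _ ≤ n + 1 := (Set.ncard_insert_le _ _).trans (by omega)

lemma snoc {a b c : G} {f : b ⟶ a} {n : ℕ} (hw : Word S f n) (s : a ⟶ c)
    (hs : S.Simple s ∨ S.Simple (Groupoid.inv s)) : Word S (f ≫ s) (n + 1) := by
  induction hw with
  | nil =>
    simpa using Word.cons s (𝟙 c) 0 hs (Word.nil c)
  | cons t f m ht _ ih =>
    simpa using Word.cons t (f ≫ s) (m + 1) ht ih

lemma exists_eq_comp {a b : G} {f : b ⟶ a} {n : ℕ} (hw : Word S f (n + 1)) :
    ∃ (c : G) (g : b ⟶ c) (s : c ⟶ a), f = g ≫ s ∧ Word S g n ∧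
      (S.Simple s ∨ S.Simple (Groupoid.inv s)) := by
  induction n generalizing a b f with
  | zero =>
    cases hw with | cons s f _ hs hf =>
    cases hf
    exact ⟨_, 𝟙 _, s, by simp, Word.nil _, hs⟩
  | succ k ih =>
    cases hw with | cons s f _ hs hf =>
    obtain ⟨c, g, t, rfl, hg, ht⟩ := ih hf
    exact ⟨c, s ≫ g, t, by simp, Word.cons s g k hs hg, ht⟩

end Word

namespace SGS

variable {G : Type u} [Groupoid G] {R : G → Type v} (S : SGS G R)

lemma exists_atomic_subset (hif : S.IntervalFinite) {a b : G} (f : b ⟶ a)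
    (hf : S.Phi f ≠ ∅) : ∃ m : SHoms G a, S.Atomic m ∧ S.PhiS m ⊆ S.Phi f := by
  set T := {k : SHoms G a | S.PhiS k ⊆ S.Phi f ∧ S.PhiS k ≠ ∅}
  have hT : T.Finite := (hif a ⟨b, f⟩).subset fun _ hk => hk.1
  obtain ⟨m, ⟨hmf, hm⟩, hmin⟩ := hT.exists_minimalFor S.PhiS T ⟨⟨b, f⟩, subset_rfl, hf⟩
  refine ⟨m, ⟨hm, fun k hkm => ?_⟩, hmf⟩
  by_cases hk : S.PhiS k = ∅
  · exact Or.inl hk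
  · exact Or.inr (hkm.antisymm (hmin ⟨hkm.trans hmf, hk⟩ hkm))

lemma ncard_interval_comp_inv_lt (hif : S.IntervalFinite) {a b c : G} (f : b ⟶ a)
    (h : c ⟶ a) (hhf : S.Phi h ⊆ S.Phi f) (hh : S.Phi h ≠ ∅) :
    {k : SHoms G c | S.PhiS k ⊆ S.Phi (f ≫ Groupoid.inv h)}.ncard
      < {k : SHoms G a | S.PhiS k ⊆ S.Phi f}.ncard := by
  set I := {k : SHoms G a | S.PhiS k ⊆ S.Phi f}
  have hI : I.Finite := hif a ⟨b, f⟩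
  have hid : (⟨a, 𝟙 a⟩ : SHoms G a) ∈ I := by
    simp [I, PhiS, S.phi_id]
  refine lt_of_le_of_lt (Set.ncard_le_ncard_of_injOn
    (fun k => (⟨k.1, k.2 ≫ h⟩ : SHoms G a)) ?_ ?_ hI.sdiff)
    (Set.ncard_sdiff_singleton_lt_of_mem hid hI)
  · rintro ⟨d, k⟩ (hk : S.Phi k ⊆ S.Phi (f ≫ Groupoid.inv h))
    have hkf : S.act h '' S.Phi k ⊆ S.Phi f \ S.Phi h := by
      rw [S.phi_comp_inv_of_subset hhf] at hk
      rintro _ ⟨γ, hγ, rfl⟩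
      obtain ⟨δ, hδ, rfl⟩ := hk hγ
      rwa [S.act_inv_act]
    have hkh : S.Phi (k ≫ h) = S.Phi h ∪ S.act h '' S.Phi k :=
      S.phi_comp_of_image_subset_pos k h (hkf.trans fun _ hβ => hβ.1.1)
    refine ⟨?_, fun hid' => hh ?_⟩
    · simpa [I, PhiS, hkh] using And.intro hhf (hkf.trans Set.sdiff_subset)
    · have := congrArg S.PhiS (Set.mem_singleton_iff.1 hid')
      simp only [PhiS, S.phi_id, hkh] at this
      exact Set.subset_eq_empty Set.subset_union_left this
  · rintro ⟨d, k⟩ - ⟨d', k'⟩ - hkk'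
    simp only [Sigma.mk.inj_iff] at hkk'
    obtain ⟨rfl, hkk'⟩ := hkk'
    rw [(cancel_mono h).1 (eq_of_heq hkk')]

theorem word_ncard_phi (hfa : S.Faithful) (hif : S.IntervalFinite)
    (hat : ∀ {a b : G} (f : b ⟶ a), S.Atomic ⟨b, f⟩ → S.Simple f)
    {a b : G} (f : b ⟶ a) : Word S f (S.Phi f).ncard := by
  induction hN : {k : SHoms G a | S.PhiS k ⊆ S.Phi f}.ncard using Nat.strong_induction_on
    generalizing a b f with
  | _ N ih =>
  by_cases hf : S.Phi f = ∅
  · obtain ⟨rfl, rfl⟩ := hfa f hf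
    simpa [S.phi_id] using Word.nil (S := S) b
  obtain ⟨⟨c, h⟩, hatom, hhf⟩ := S.exists_atomic_subset hif f hf
  obtain ⟨α, hα⟩ := hat h hatom
  have hh : S.Phi h ≠ ∅ := by simp [hα]
  have hw := ih _ (hN ▸ S.ncard_interval_comp_inv_lt hif f h hhf hh) (f ≫ Groupoid.inv h) rfl
  have hfin := hw.finite_phi
  rw [S.phi_comp_inv_of_subset hhf, hα] at hw hfin
  rw [Set.ncard_image_of_injective _ (S.act_injective _)] at hw
  have hαf : α ∈ S.Phi f := hhf (by simp [PhiS, hα])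
  have hf_fin : (S.Phi f).Finite :=
    (hfin.of_finite_image (S.act_injective _).injOn).of_sdiff (Set.finite_singleton α)
  simpa [Set.ncard_sdiff_singleton_add_one hαf hf_fin] using hw.snoc h (Or.inl ⟨α, hα⟩)

theorem principal_of_atomic_simple (hfa : S.Faithful) (hif : S.IntervalFinite)
    (hat : ∀ {a b : G} (f : b ⟶ a), S.Atomic ⟨b, f⟩ → S.Simple f) : S.Principal :=
  ⟨S.word_ncard_phi hfa hif hat, fun _ _ hw => hw.ncard_phi_le⟩

namespace Principal

variable {S}

lemma simple_of_atomic (hp : S.Principal) {a b : G} (f : b ⟶ a) (hat : S.Atomic ⟨b, f⟩) :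
    S.Simple f := by
  have hf : S.Phi f ≠ ∅ := hat.1
  have hw := hp.1 f
  obtain ⟨n, hn⟩ : ∃ n, (S.Phi f).ncard = n + 1 :=
    Nat.exists_eq_add_one.2 ((Set.ncard_pos hw.finite_phi).2 (Set.nonempty_iff_ne_empty.2 hf))
  rw [hn] at hw
  obtain ⟨c, g, t, rfl, hg, ht⟩ := hw.exists_eq_comp
  obtain ⟨α, hα⟩ := S.exists_phi_eq_singleton ht
  by_cases hαf : α ∈ S.Phi (g ≫ t)
  · refine ⟨α, ((hat.2 ⟨c, t⟩ ?_).resolve_left ?_).symm.trans hα⟩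
    · simpa [PhiS, hα] using hαf
    · simp [PhiS, hα]
  · have hsub : S.Phi (g ≫ t) ⊆ S.act t '' S.Phi g := fun β hβ =>
      (S.phi_comp_subset g t hβ).resolve_left fun hβt => by
        rw [hα] at hβt
        exact hαf (Set.mem_singleton_iff.1 hβt ▸ hβ)
    have := (Set.ncard_le_ncard hsub (hg.finite_phi.image _)).trans
      ((Set.ncard_image_of_injective _ (S.act_injective t)).trans_le hg.ncard_phi_le)
    omega

lemma intervalFinite (hfa : S.Faithful) (hp : S.Principal) : S.IntervalFinite := fun a g =>
  ((hp.1 g.2).finite_phi.finite_subsets).preimage (S.phiS_injective hfa a).injOn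

lemma preprincipal (hfa : S.Faithful) (hp : S.Principal) : S.Preprincipal := by
  refine ⟨hp.intervalFinite hfa, fun a s g hs => ?_⟩
  obtain ⟨α, hα⟩ := hp.simple_of_atomic s.2 hs
  simp only [PhiS, hα, Set.singleton_subset_iff, Set.singleton_inter_eq_empty]
  exact em _

end Principal

end SGS

/-- a faithful interval-finite signed groupoid set all of whose atomic
morphisms are simple is principal; conversely, a faithful principal signed groupoid
set has all atomic morphisms simple, and is preprincipal. -/
theorem stmt_15 {G : Type u} [Groupoid G] {R : G → Type v} (S : SGS G R)
    (hfa : S.Faithful) :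
    (S.IntervalFinite → (∀ {a b : G} (f : b ⟶ a), S.Atomic ⟨b, f⟩ → S.Simple f) →
      S.Principal) ∧
    (S.Principal →
      (∀ {a b : G} (f : b ⟶ a), S.Atomic ⟨b, f⟩ → S.Simple f) ∧ S.Preprincipal) :=
  ⟨S.principal_of_atomic_simple hfa, fun hp => ⟨hp.simple_of_atomic, hp.preprincipal hfa⟩⟩
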